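/- arXiv:0808.0754 — 2 statements merged into one kernel-verified Lean document; each statement's English description precedes it below -/
import Mathlib

section
/- For all natural numbers i, the Abian product formula computes the powerset encoding: set2nat({ set2nat(T) : T ⊆ nat2set(i) }) = ∏_{k ∈ nat2set(i)} (1 + 2^(2^k)). -/
def set2nat (S : Finset ℕ) : ℕ := ∑ k ∈ S, 2 ^ k

def nat2set (n : ℕ) : Finset ℕ := (Finset.range (n + 1)).filter (fun k => n.testBit k)

/-! Since `set2nat` is injective and turns unions of disjoint sets into sums, encoding the
powerset of `S` gives `∑_{T ⊆ S} ∏_{k ∈ T} 2^(2^k)`, which is the expansion of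
`∏_{k ∈ S} (1 + 2^(2^k))`. -/

theorem set2nat_injective : Function.Injective set2nat :=
  Finset.geomSum_injective le_rfl

theorem two_pow_set2nat (T : Finset ℕ) : 2 ^ set2nat T = ∏ k ∈ T, 2 ^ 2 ^ k :=
  (Finset.prod_pow_eq_pow_sum T _ 2).symm

theorem set2nat_image_set2nat (F : Finset (Finset ℕ)) :
    set2nat (F.image set2nat) = ∑ T ∈ F, 2 ^ set2nat T :=
  Finset.sum_image fun _ _ _ _ h => set2nat_injective h

theorem set2nat_image_set2nat_powerset (S : Finset ℕ) :
    set2nat (S.powerset.image set2nat) = ∏ k ∈ S, (1 + 2 ^ 2 ^ k) := by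
  simp only [set2nat_image_set2nat, two_pow_set2nat, Finset.prod_one_add]

theorem abian_powset_formula (i : ℕ) :
    set2nat ((nat2set i).powerset.image set2nat) =
      ∏ k ∈ nat2set i, (1 + 2 ^ (2 ^ k)) :=
  set2nat_image_set2nat_powerset (nat2set i)
end

section
/- Ackermann's encoding transports union: for hereditarily finite sets x and y, f(x ∪ y) = f(x) OR f(y) (bitwise or), and f(x ∩ y) = f(x) AND f(y) (bitwise and). -/
attribute [local instance] Classical.propDecidable

/-- Hereditarily finite sets as finitely-branching rose trees (to be identified
up to extensionality). -/
inductive HF : Type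
  | mk : List HF → HF

/-- Extensional equality of hereditarily finite sets. -/
def ExtEq : HF → HF → Prop
  | .mk l, .mk m =>
      (∀ a : {a // a ∈ l}, ∃ b : {b // b ∈ m}, ExtEq a.1 b.1) ∧
      (∀ b : {b // b ∈ m}, ∃ a : {a // a ∈ l}, ExtEq a.1 b.1)
  termination_by x y => sizeOf x + sizeOf y
  decreasing_by
    all_goals
      have h1 := List.sizeOf_lt_of_mem a.2
      have h2 := List.sizeOf_lt_of_mem b.2
      simp; omega

/-- Membership, up to extensionality. -/
def HFMem (a : HF) : HF → Prop
  | .mk l => ∃ b ∈ l, ExtEq a b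

/-- Union of two hereditarily finite sets. -/
def HFUnion : HF → HF → HF
  | .mk l, .mk m => .mk (l ++ m)

/-- Intersection of two hereditarily finite sets. -/
noncomputable
def HFInter : HF → HF → HF
  | .mk l, y => .mk (l.filter (fun a => decide (HFMem a y)))

/-- The Ackermann encoding: `f x = ∑_{a ∈ x} 2^(f a)`. -/
def ackermann : HF → ℕ
  | .mk l => ∑ k ∈ ((l.attach.map (fun a => ackermann a.1)).toFinset), 2 ^ k
  decreasing_by have := List.sizeOf_lt_of_mem a.2; simp; omega

/-! Bit `n` of `ackermann (.mk l)` is set exactly when some member of `l` has code `n`, since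
the encoding sums distinct powers of two. By induction on the trees this makes extensional
equality coincide with equality of codes, so `a` is a member of `y` iff bit `ackermann a` of
`ackermann y` is set; membership in a union (intersection) is then the disjunction
(conjunction) of the two memberships, read off bitwise. -/

theorem Nat.testBit_sum_two_pow (s : Finset ℕ) (i : ℕ) :
    (∑ k ∈ s, 2 ^ k).testBit i ↔ i ∈ s := by
  rw [← Nat.mem_bitIndices, ← List.mem_toFinset, Finset.toFinset_bitIndices_sum_two_pow]

namespace HF

theorem testBit_ackermann_mk (l : List HF) (n : ℕ) :
    (ackermann (.mk l)).testBit n ↔ ∃ a ∈ l, ackermann a = n := by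
  simp [ackermann, Nat.testBit_sum_two_pow]

theorem ackermann_mk_eq_iff (l m : List HF) :
    ackermann (.mk l) = ackermann (.mk m) ↔
      ∀ n, (∃ a ∈ l, ackermann a = n) ↔ ∃ b ∈ m, ackermann b = n := by
  simp only [← testBit_ackermann_mk]
  exact ⟨fun h n => by rw [h], fun h => Nat.eq_of_testBit_eq fun n => Bool.eq_iff_iff.2 (h n)⟩

theorem extEq_iff_ackermann_eq : (x y : HF) → (ExtEq x y ↔ ackermann x = ackermann y)
  | .mk l, .mk m => by
    have ih : ∀ a ∈ l, ∀ b ∈ m, (ExtEq a b ↔ ackermann a = ackermann b) :=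
      fun a _ b _ => extEq_iff_ackermann_eq a b
    rw [ExtEq, ackermann_mk_eq_iff]
    simp only [Subtype.forall, Subtype.exists, exists_prop]
    constructor
    · rintro ⟨hl, hm⟩ n
      constructor
      · rintro ⟨a, ha, rfl⟩
        obtain ⟨b, hb, hab⟩ := hl a ha
        exact ⟨b, hb, ((ih a ha b hb).1 hab).symm⟩
      · rintro ⟨b, hb, rfl⟩
        obtain ⟨a, ha, hab⟩ := hm b hb
        exact ⟨a, ha, (ih a ha b hb).1 hab⟩
    · intro h
      refine ⟨fun a ha => ?_, fun b hb => ?_⟩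
      · obtain ⟨b, hb, hab⟩ := (h _).1 ⟨a, ha, rfl⟩
        exact ⟨b, hb, (ih a ha b hb).2 hab.symm⟩
      · obtain ⟨a, ha, hab⟩ := (h _).2 ⟨b, hb, rfl⟩
        exact ⟨a, ha, (ih a ha b hb).2 hab⟩
  termination_by x y => sizeOf x + sizeOf y
  decreasing_by
    have := List.sizeOf_lt_of_mem ‹a ∈ l›
    have := List.sizeOf_lt_of_mem ‹b ∈ m›
    simp; omega

theorem hfMem_iff_testBit_ackermann (a y : HF) :
    HFMem a y ↔ (ackermann y).testBit (ackermann a) := by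
  obtain ⟨m⟩ := y
  simp only [HFMem, testBit_ackermann_mk, extEq_iff_ackermann_eq, @eq_comm _ (ackermann a)]

theorem ackermann_hfUnion (x y : HF) :
    ackermann (HFUnion x y) = ackermann x ||| ackermann y := by
  obtain ⟨l⟩ := x
  obtain ⟨m⟩ := y
  refine Nat.eq_of_testBit_eq fun n => Bool.eq_iff_iff.2 ?_
  simp only [HFUnion, Nat.testBit_or, Bool.or_eq_true, testBit_ackermann_mk, List.mem_append,
    or_and_right, exists_or]

theorem ackermann_hfInter (x y : HF) :
    ackermann (HFInter x y) = ackermann x &&& ackermann y := by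
  obtain ⟨l⟩ := x
  refine Nat.eq_of_testBit_eq fun n => Bool.eq_iff_iff.2 ?_
  simp only [HFInter, Nat.testBit_and, Bool.and_eq_true, testBit_ackermann_mk, List.mem_filter,
    decide_eq_true_iff, hfMem_iff_testBit_ackermann]
  constructor
  · rintro ⟨a, ⟨ha, hay⟩, rfl⟩
    exact ⟨⟨a, ha, rfl⟩, hay⟩
  · rintro ⟨⟨a, ha, rfl⟩, hay⟩
    exact ⟨a, ⟨ha, hay⟩, rfl⟩

end HF

/-- Ackermann's encoding transports union to bitwise or and intersection to
bitwise and. -/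
theorem ackermann_union_inter (x y : HF) :
    ackermann (HFUnion x y) = ackermann x ||| ackermann y ∧
    ackermann (HFInter x y) = ackermann x &&& ackermann y :=
  ⟨HF.ackermann_hfUnion x y, HF.ackermann_hfInter x y⟩
end
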